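/- Let n ≥ 2 and let Ω ⊂ ℝⁿ be an open set such that 0 < xₙ < e^{−1} for all x = (x′, xₙ) ∈ Ω. Define v(x) = xₙ·[(−log xₙ)^{1/n} − 1]·(|x′|² − 1) for x ∈ Ω. Then v is smooth in Ω and det D²v(x) ≤ 2ⁿ · xₙ^{n−2} for all x ∈ Ω. -/

import Mathlib

/-!
Write `v = f(xₙ) (|x′|² - 1)` with `f(t) = t ((-log t)^{1/n} - 1)`. The Hessian of `v` is an
arrow matrix: `2 f(xₙ)` on the `x′`-diagonal, `f''(xₙ) (|x′|² - 1)` in the corner and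
`2 xᵢ f'(xₙ)` in the last row and column. Taking the Schur complement of the diagonal block,
`det D²v ≤ (2f)^{n-1} f'' (|x′|² - 1) ≤ (2f)^{n-1} (-f'')`, because `f > 0` and `f'' < 0`.
With `L = -log t > 1` and `g = L^{1/n}`, so that `gⁿ = L`,
`f^{n-1} (-f'') = t^{n-2} (g - 1)^{n-1} g (L + 1 - 1/n) / (n L²) ≤ t^{n-2} (L + 1 - 1/n) / (n L)`,
which is at most `2 t^{n-2}`.
-/

open Metric MeasureTheory Real

/-- The Hessian matrix of `u : ℝⁿ → ℝ` at `x`, with entries the second partial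
derivatives `∂²u/∂xᵢ∂xⱼ` computed via iterated Fréchet derivatives. -/
noncomputable def hessianMatrix {n : ℕ} (u : EuclideanSpace ℝ (Fin n) → ℝ)
    (x : EuclideanSpace ℝ (Fin n)) : Matrix (Fin n) (Fin n) ℝ :=
  Matrix.of fun i j =>
    fderiv ℝ (fun y => fderiv ℝ u y (EuclideanSpace.single j 1)) x (EuclideanSpace.single i 1)

/-- The determinant of the Hessian matrix, `det D²u(x)`. -/
noncomputable def hessianDet {n : ℕ} (u : EuclideanSpace ℝ (Fin n) → ℝ)
    (x : EuclideanSpace ℝ (Fin n)) : ℝ := (hessianMatrix u x).det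

open Finset Filter Topology

namespace Matrix

variable {ι K : Type*} [Fintype ι] [DecidableEq ι]

def arrowMatrix [Zero K] (N : ι) (α d : K) (w : ι → K) : Matrix ι ι K :=
  of fun i j => if i = N then (if j = N then d else w j)
    else if j = N then w i else if i = j then α else 0

theorem det_arrowMatrix [Field K] (N : ι) {α : K} (hα : α ≠ 0) (d : K) (w : ι → K) :
    (arrowMatrix N α d w).det =
      α ^ (Fintype.card ι - 1) * (d - α⁻¹ * ∑ i ∈ univ.erase N, w i ^ 2) := by
  let e := Equiv.sumCompl (· = N)
  have : Unique {i // i = N} := ⟨⟨⟨N, rfl⟩⟩, fun i => Subtype.ext i.2⟩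
  have hinv : (α • 1 : Matrix {i // ¬i = N} {i // ¬i = N} K) * (α⁻¹ • 1) = 1 := by simp [hα]
  have : Invertible (α • 1 : Matrix {i // ¬i = N} {i // ¬i = N} K) :=
    invertibleOfRightInverse _ _ hinv
  have hblocks : (arrowMatrix N α d w).submatrix e e = fromBlocks
      (of fun (_ _ : {i // i = N}) => d) (of fun (_ : {i // i = N}) (j : {i // ¬i = N}) => w j)
      (of fun (i : {i // ¬i = N}) (_ : {i // i = N}) => w i) (α • 1) := by
    ext (⟨i, hi⟩ | ⟨i, hi⟩) (⟨j, hj⟩ | ⟨j, hj⟩) <;>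
      simp [arrowMatrix, e, hi, hj, one_apply, Subtype.ext_iff]
  have hsum : ∑ i ∈ univ.erase N, w i ^ 2 = ∑ i : {i // ¬i = N}, w i ^ 2 :=
    sum_subtype _ (by simp) _
  rw [← det_submatrix_equiv_self e, hblocks, det_fromBlocks₂₂, det_unique (n := {i // i = N}),
    invOf_eq_right_inv hinv, det_smul, det_one, mul_one, Fintype.card_subtype_compl,
    Fintype.card_subtype_eq, hsum, mul_sum]
  simp only [sub_apply, mul_apply, smul_apply, one_apply, of_apply]
  congr 2
  refine sum_congr rfl fun j _ => ?_
  simp only [smul_eq_mul, mul_ite, mul_one, mul_zero, sum_ite_eq', mem_univ, ↓reduceIte]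
  ring

theorem det_arrowMatrix_le [Field K] [LinearOrder K] [IsStrictOrderedRing K] (N : ι) {α : K}
    (hα : 0 < α) (d : K) (w : ι → K) :
    (arrowMatrix N α d w).det ≤ α ^ (Fintype.card ι - 1) * d := by
  rw [det_arrowMatrix N hα.ne']
  gcongr
  exact sub_le_self _ (mul_nonneg (inv_nonneg.2 hα.le) (sum_nonneg fun _ _ => sq_nonneg _))

end Matrix

noncomputable def logProfile (c t : ℝ) : ℝ := t * ((-log t) ^ c - 1)

noncomputable def logProfileDeriv (c t : ℝ) : ℝ := (-log t) ^ c - 1 - c * (-log t) ^ (c - 1)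

noncomputable def logProfileDeriv2 (c t : ℝ) : ℝ :=
  -(c / t) * (-log t) ^ (c - 2) * (-log t + 1 - c)

section LogProfile

variable {c t : ℝ}

theorem hasDerivAt_neg_log_rpow (ht0 : 0 < t) (ht1 : t < 1) (p : ℝ) :
    HasDerivAt (fun s => (-log s) ^ p) (-(p * (-log t) ^ (p - 1) / t)) t := by
  have hL : -log t ≠ 0 := by linarith [log_neg ht0 ht1]
  refine ((hasDerivAt_rpow_const (p := p) (Or.inl hL)).comp t
    (hasDerivAt_log ht0.ne').neg).congr_deriv ?_
  ring

theorem hasDerivAt_logProfile (ht0 : 0 < t) (ht1 : t < 1) :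
    HasDerivAt (logProfile c) (logProfileDeriv c t) t :=
  ((hasDerivAt_id' t).fun_mul ((hasDerivAt_neg_log_rpow ht0 ht1 c).sub_const 1)).congr_deriv
    (by rw [logProfileDeriv]; field_simp; ring)

theorem hasDerivAt_logProfileDeriv (ht0 : 0 < t) (ht1 : t < 1) :
    HasDerivAt (logProfileDeriv c) (logProfileDeriv2 c t) t := by
  have hL : 0 < -log t := by linarith [log_neg ht0 ht1]
  have hc1 : (-log t) ^ (c - 1) = (-log t) ^ (c - 2) * (-log t) := by
    rw [← rpow_add_one hL.ne']; ring_nf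
  refine (((hasDerivAt_neg_log_rpow ht0 ht1 c).sub_const 1).fun_sub
    ((hasDerivAt_neg_log_rpow ht0 ht1 (c - 1)).const_mul c)).congr_deriv ?_
  rw [logProfileDeriv2, hc1, show c - 1 - 1 = c - 2 by ring]
  field_simp
  ring

theorem contDiffAt_logProfile {k : WithTop ℕ∞} (ht0 : 0 < t) (ht1 : t < 1) :
    ContDiffAt ℝ k (logProfile c) t := by
  have hL : -log t ≠ 0 := by linarith [log_neg ht0 ht1]
  exact contDiffAt_id.mul (((contDiffAt_rpow_const_of_ne hL).comp t
    (contDiffAt_log.2 ht0.ne').neg).sub contDiffAt_const)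

theorem logProfile_pos (hc : 0 < c) (ht0 : 0 < t) (hL : 1 < -log t) : 0 < logProfile c t :=
  mul_pos ht0 (sub_pos.2 (one_lt_rpow hL hc))

theorem logProfileDeriv2_neg (hc0 : 0 < c) (hc1 : c ≤ 1) (ht0 : 0 < t) (hL : 1 < -log t) :
    logProfileDeriv2 c t < 0 := by
  have : 0 < c / t * (-log t) ^ (c - 2) * (-log t + 1 - c) := by
    have := rpow_pos_of_pos (zero_lt_one.trans hL) (c - 2)
    have := div_pos hc0 ht0
    have : 0 < -log t + 1 - c := by linarith
    positivity
  rw [logProfileDeriv2]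
  linarith

theorem logProfile_pow_mul_neg_deriv2_le {n : ℕ} (hn : 2 ≤ n) (ht0 : 0 < t)
    (hL : 1 < -log t) :
    logProfile (1 / n) t ^ (n - 1) * -logProfileDeriv2 (1 / n) t ≤ 2 * t ^ (n - 2) := by
  rw [logProfile, logProfileDeriv2]
  generalize -log t = L at hL ⊢
  set c : ℝ := 1 / n
  have hL0 : 0 < L := zero_lt_one.trans hL
  have hc0 : 0 < c := by positivity
  have hc1 : c ≤ 1 := div_le_one_of_le₀ (by norm_cast; omega) (by positivity)
  have hgn : (L ^ c) ^ n = L := by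
    simp only [c, one_div]
    exact rpow_inv_natCast_pow hL0.le (by omega)
  have hLc : L ^ (c - 2) = L ^ c / L ^ 2 := by rw [rpow_sub hL0, rpow_two]
  set g := L ^ c
  have hg : 1 < g := one_lt_rpow hL hc0
  have hgg : (g - 1) ^ (n - 1) * g ≤ g ^ n :=
    calc (g - 1) ^ (n - 1) * g ≤ g ^ (n - 1) * g := by gcongr; linarith
      _ = g ^ n := by rw [← pow_succ]; congr 1; omega
  have ht : t ^ (n - 1) = t ^ (n - 2) * t := by rw [← pow_succ]; congr 1; omega
  have hL2 : (L + 1 - c) / L ≤ 2 := by rw [div_le_iff₀ hL0]; linarith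
  calc (t * (g - 1)) ^ (n - 1) * -(-(c / t) * L ^ (c - 2) * (L + 1 - c))
      = c * t ^ (n - 2) * ((g - 1) ^ (n - 1) * g) * (L + 1 - c) / L ^ 2 := by
        rw [hLc, mul_pow, ht]
        field_simp
    _ ≤ c * t ^ (n - 2) * g ^ n * (L + 1 - c) / L ^ 2 := by
        gcongr
        linarith
    _ = c * t ^ (n - 2) * ((L + 1 - c) / L) := by
        rw [hgn]
        field_simp
    _ ≤ 1 * t ^ (n - 2) * 2 := by
        gcongr
        exact div_nonneg (by linarith) hL0.le
    _ = 2 * t ^ (n - 2) := by ring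

end LogProfile

section Euclidean

theorem hasFDerivAt_euclideanSpace_apply {ι : Type*} (x : EuclideanSpace ℝ ι) (i : ι) :
    HasFDerivAt (fun y : EuclideanSpace ℝ ι => y i) (EuclideanSpace.proj (𝕜 := ℝ) i) x :=
  (EuclideanSpace.proj (𝕜 := ℝ) i).hasFDerivAt

variable {ι : Type*} [Fintype ι] [DecidableEq ι]

noncomputable def normSqErase (N : ι) (x : EuclideanSpace ℝ ι) : ℝ :=
  ∑ i ∈ univ.erase N, x i ^ 2

theorem normSqErase_nonneg (N : ι) (x : EuclideanSpace ℝ ι) : 0 ≤ normSqErase N x :=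
  sum_nonneg fun _ _ => sq_nonneg _

theorem hasFDerivAt_normSqErase (N : ι) (x : EuclideanSpace ℝ ι) :
    HasFDerivAt (normSqErase N)
      (∑ i ∈ univ.erase N, (2 * x i) • EuclideanSpace.proj (𝕜 := ℝ) i) x :=
  HasFDerivAt.fun_sum fun i _ => by
    refine ((hasDerivAt_pow 2 (x i)).comp_hasFDerivAt x
      (hasFDerivAt_euclideanSpace_apply x i)).congr_fderiv ?_
    norm_num

theorem contDiff_normSqErase {k : WithTop ℕ∞} (N : ι) : ContDiff ℝ k (normSqErase N) :=
  ContDiff.sum fun i _ => (EuclideanSpace.proj (𝕜 := ℝ) i).contDiff.pow 2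

theorem fderiv_apply_mul_apply_single {F : ℝ → ℝ} {F' : ℝ} {G : EuclideanSpace ℝ ι → ℝ}
    {G' : EuclideanSpace ℝ ι →L[ℝ] ℝ} {N : ι} {x : EuclideanSpace ℝ ι}
    (hF : HasDerivAt F F' (x N)) (hG : HasFDerivAt G G' x) (j : ι) :
    fderiv ℝ (fun y => F (y N) * G y) x (EuclideanSpace.single j 1) =
      F (x N) * G' (EuclideanSpace.single j 1) + G x * (if j = N then F' else 0) := by
  have h : HasFDerivAt (fun y => F (y N) * G y)
      (F (x N) • G' + G x • F' • EuclideanSpace.proj (𝕜 := ℝ) N) x :=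
    (hF.comp_hasFDerivAt x (hasFDerivAt_euclideanSpace_apply x N)).fun_mul hG
  rw [h.fderiv]
  simp [PiLp.single_apply, eq_comm]

theorem fderiv_profile_apply_single {F : ℝ → ℝ} {F' : ℝ} {N : ι} {x : EuclideanSpace ℝ ι}
    (hF : HasDerivAt F F' (x N)) (j : ι) :
    fderiv ℝ (fun y => F (y N) * (normSqErase N y - 1)) x (EuclideanSpace.single j 1) =
      if j = N then F' * (normSqErase N x - 1) else F (x N) * (2 * x j) := by
  rw [fderiv_apply_mul_apply_single hF ((hasFDerivAt_normSqErase N x).sub_const 1)]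
  by_cases hj : j = N <;> simp [hj, PiLp.single_apply, mul_comm]

end Euclidean

theorem hessianMatrix_profile {n : ℕ} {N : Fin n} {F F' : ℝ → ℝ} {F'' : ℝ}
    {x : EuclideanSpace ℝ (Fin n)} (hF : ∀ᶠ s in 𝓝 (x N), HasDerivAt F (F' s) s)
    (hF' : HasDerivAt F' F'' (x N)) :
    hessianMatrix (fun y => F (y N) * (normSqErase N y - 1)) x =
      Matrix.arrowMatrix N (2 * F (x N)) (F'' * (normSqErase N x - 1))
        (fun i => 2 * x i * F' (x N)) := by
  have hcol : ∀ j, (fun y => fderiv ℝ (fun y => F (y N) * (normSqErase N y - 1)) y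
      (EuclideanSpace.single j 1)) =ᶠ[𝓝 x]
      fun y => if j = N then F' (y N) * (normSqErase N y - 1) else F (y N) * (2 * y j) :=
    fun j => ((hasFDerivAt_euclideanSpace_apply x N).continuousAt.eventually hF).mono
      fun y hy => fderiv_profile_apply_single hy j
  ext i j
  rw [hessianMatrix, Matrix.of_apply, (hcol j).fderiv_eq]
  by_cases hj : j = N
  · subst hj
    simp only [if_true]
    rw [fderiv_profile_apply_single hF']
    by_cases hi : i = j <;> simp [Matrix.arrowMatrix, hi, mul_comm]
  · simp only [hj, if_false]
    rw [fderiv_apply_mul_apply_single hF.self_of_nhds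
      ((hasFDerivAt_euclideanSpace_apply x j).const_mul 2)]
    by_cases hi : i = N <;>
      simp [Matrix.arrowMatrix, hi, hj, PiLp.single_apply, @eq_comm _ j i, mul_comm]

/-- The (not necessarily convex) supersolution
`v(x) = xₙ[(-log xₙ)^{1/n} - 1](|x'|² - 1)` satisfies `det D²v ≤ 2ⁿ xₙ^{n-2}`. -/
theorem stmt_13 (n : ℕ) (hn : 2 ≤ n)
    (Ω : Set (EuclideanSpace ℝ (Fin n)))
    (hΩ : ∀ x ∈ Ω, 0 < x ⟨n - 1, by omega⟩ ∧ x ⟨n - 1, by omega⟩ < Real.exp (-1))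
    (v : EuclideanSpace ℝ (Fin n) → ℝ)
    (hv : v = fun x => x ⟨n - 1, by omega⟩ *
        ((-Real.log (x ⟨n - 1, by omega⟩)) ^ ((1 : ℝ) / n) - 1) *
        ((∑ i ∈ Finset.univ.erase (⟨n - 1, by omega⟩ : Fin n), x i ^ 2) - 1)) :
    ContDiffOn ℝ (⊤ : ℕ∞) v Ω ∧
    ∀ x ∈ Ω, hessianDet v x ≤ (2 : ℝ) ^ n * x ⟨n - 1, by omega⟩ ^ (n - 2) := by
  set N : Fin n := ⟨n - 1, by omega⟩
  set c : ℝ := 1 / n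
  obtain rfl : v = fun y => logProfile c (y N) * (normSqErase N y - 1) := hv
  have hslab : ∀ x ∈ Ω, 0 < x N ∧ x N < 1 ∧ 1 < -log (x N) := fun x hx =>
    ⟨(hΩ x hx).1, (hΩ x hx).2.trans (exp_lt_one_iff.2 (by norm_num)),
      by linarith [(log_lt_iff_lt_exp (hΩ x hx).1).2 (hΩ x hx).2]⟩
  refine ⟨fun x hx => ?_, fun x hx => ?_⟩
  · obtain ⟨ht0, ht1, -⟩ := hslab x hx
    exact (((contDiffAt_logProfile ht0 ht1).comp x
      (EuclideanSpace.proj (𝕜 := ℝ) N).contDiff.contDiffAt).mul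
      ((contDiff_normSqErase N).contDiffAt.sub contDiffAt_const)).contDiffWithinAt
  obtain ⟨ht0, ht1, hL⟩ := hslab x hx
  have hc0 : 0 < c := by positivity
  have hF := logProfile_pos hc0 ht0 hL
  have hF2 := logProfileDeriv2_neg hc0 (div_le_one_of_le₀ (by norm_cast; omega) (by positivity))
    ht0 hL
  have hderiv : ∀ᶠ s in 𝓝 (x N), HasDerivAt (logProfile c) (logProfileDeriv c s) s :=
    eventually_of_mem (Ioo_mem_nhds ht0 ht1) fun s hs => hasDerivAt_logProfile hs.1 hs.2
  rw [hessianDet, hessianMatrix_profile hderiv (hasDerivAt_logProfileDeriv ht0 ht1)]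
  set t := x N
  calc _ ≤ (2 * logProfile c t) ^ (n - 1) * (logProfileDeriv2 c t * (normSqErase N x - 1)) := by
        simpa using Matrix.det_arrowMatrix_le N (by positivity) _ _
    _ ≤ (2 * logProfile c t) ^ (n - 1) * -logProfileDeriv2 c t := by
        gcongr
        nlinarith [normSqErase_nonneg N x]
    _ = 2 ^ (n - 1) * (logProfile c t ^ (n - 1) * -logProfileDeriv2 c t) := by ring
    _ ≤ 2 ^ (n - 1) * (2 * t ^ (n - 2)) :=
        mul_le_mul_of_nonneg_left (logProfile_pow_mul_neg_deriv2_le hn ht0 hL) (by positivity)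
    _ = 2 ^ n * t ^ (n - 2) := by rw [← mul_assoc, ← pow_succ]; congr 2; omega
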